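/- Fix a closed convex set of outcomes P ⊆ Δ(A×Θ), a player i, and two P-coherent actions a_i, b_i. Suppose the following two conditions both fail: (i) there exists μ ∈ Δ(A_{-i}×Θ) such that for all extreme points p of P, {p_{a_i}, p_{b_i}} ⊆ {μ, 0}; and (ii) there exists λ > 0 such that for all extreme points p of P, p(a_i)·p_{a_i} = λ·p(b_i)·p_{b_i} (as vectors in ℝ^{A_{-i}×Θ}). Then there exists p ∈ P with a_i, b_i ∈ supp_i(p) and p_{a_i} ≠ p_{b_i}. -/
import Mathlib


open Finset

variable {I : Type} [Fintype I] [DecidableEq I]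
  {A : I → Type} [∀ i, Fintype (A i)] [∀ i, DecidableEq (A i)]
  {Θ : Type} [Fintype Θ]

/-- The marginal probability that player `i` plays `ai` under outcome `p`. -/
noncomputable def marg (p : ((∀ j, A j) × Θ) → ℝ) (i : I) (ai : A i) : ℝ :=
  ∑ x : (∀ j, A j) × Θ, if x.1 i = ai then p x else 0

lemma marg_nonneg' (p : ((∀ j, A j) × Θ) → ℝ) (hp : ∀ y, 0 ≤ p y) (i : I) (ai : A i) :
    0 ≤ marg p i ai := by
  refine Finset.sum_nonneg fun x _ => ?_
  split_ifs with h
  · exact hp x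
  · exact le_rfl

lemma marg_comb' (p q : ((∀ j, A j) × Θ) → ℝ) (t s : ℝ) (i : I) (ai : A i) :
    marg (fun x => t * p x + s * q x) i ai = t * marg p i ai + s * marg q i ai := by
  simp only [marg, Finset.mul_sum, ← Finset.sum_add_distrib]
  refine Finset.sum_congr rfl fun x _ => ?_
  split_ifs with h <;> simp

lemma marg_eq_zero' (p : ((∀ j, A j) × Θ) → ℝ) (hp : ∀ y, 0 ≤ p y) (i : I) (ai : A i)
    (h : marg p i ai = 0) (x : (∀ j, A j) × Θ) :
    p (Function.update x.1 i ai, x.2) = 0 := by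
  have hkey := (Finset.sum_eq_zero_iff_of_nonneg (fun y _ => by
    split_ifs with hy
    · exact hp y
    · exact le_rfl)).mp h (Function.update x.1 i ai, x.2) (Finset.mem_univ _)
  simpa using hkey

lemma sum_invariant' (i : I) (G : ((∀ j, A j) × Θ) → ℝ)
    (hG : ∀ (y : (∀ j, A j) × Θ) (c : A i), G (Function.update y.1 i c, y.2) = G y)
    (ai : A i) :
    ∑ y : (∀ j, A j) × Θ, G y
      = (Fintype.card (A i) : ℝ) * ∑ y : (∀ j, A j) × Θ, (if y.1 i = ai then G y else 0) := by
  have key : ∀ c : A i, (∑ y : (∀ j, A j) × Θ, (if y.1 i = c then G y else 0))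
      = ∑ y : (∀ j, A j) × Θ, (if y.1 i = ai then G y else 0) := by
    intro c
    have hσ : Function.Involutive (fun y : (∀ j, A j) × Θ =>
        ((Function.update y.1 i (Equiv.swap c ai (y.1 i))), y.2)) := by
      intro y
      simp only [Function.update_idem, Function.update_self, Equiv.swap_apply_self]
      rw [Function.update_eq_self]
    refine (Fintype.sum_bijective _ hσ.bijective _ _ fun y => ?_).symm
    simp only [Function.update_self]
    by_cases h : y.1 i = ai
    · simp [h, Equiv.swap_apply_right, hG]
    · have hne : (Equiv.swap c ai) (y.1 i) ≠ c := fun hc =>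
        h ((Equiv.swap c ai).injective (hc.trans (Equiv.swap_apply_right c ai).symm))
      simp [h, hne]
  calc ∑ y : (∀ j, A j) × Θ, G y
      = ∑ y : (∀ j, A j) × Θ, ∑ c : A i, (if y.1 i = c then G y else 0) := by
        refine Finset.sum_congr rfl fun y _ => ?_
        rw [Finset.sum_ite_eq]
        simp
    _ = ∑ c : A i, ∑ y : (∀ j, A j) × Θ, (if y.1 i = c then G y else 0) := Finset.sum_comm
    _ = ∑ _c : A i, ∑ y : (∀ j, A j) × Θ, (if y.1 i = ai then G y else 0) :=
        Finset.sum_congr rfl fun c _ => key c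
    _ = (Fintype.card (A i) : ℝ) * ∑ y : (∀ j, A j) × Θ, (if y.1 i = ai then G y else 0) := by
        rw [Finset.sum_const, Finset.card_univ, nsmul_eq_mul]

lemma sum_update' (p : ((∀ j, A j) × Θ) → ℝ) (i : I) (ai : A i) :
    ∑ y : (∀ j, A j) × Θ, p (Function.update y.1 i ai, y.2)
      = (Fintype.card (A i) : ℝ) * marg p i ai := by
  rw [sum_invariant' i (fun y => p (Function.update y.1 i ai, y.2))
      (fun y c => by simp [Function.update_idem]) ai]
  congr 1
  refine Finset.sum_congr rfl fun y _ => ?_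
  by_cases h : y.1 i = ai
  · have hupd : Function.update y.1 i ai = y.1 := by rw [← h]; exact Function.update_eq_self _ _
    rw [if_pos h, if_pos h, hupd]
  · rw [if_neg h, if_neg h]

/-- The conditional belief of player `i` given recommendation `ai`, represented
as a function on full profile-state pairs that ignores the `i`-th coordinate
(it is overridden by `ai`).  It is the zero function if `marg p i ai = 0`. -/
noncomputable def condBelief (p : ((∀ j, A j) × Θ) → ℝ) (i : I) (ai : A i) :
    ((∀ j, A j) × Θ) → ℝ :=
  fun x => p (Function.update x.1 i ai, x.2) / marg p i ai

/-- Expected utility for player `i` of playing `ci` against belief `μ`. -/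
noncomputable def dev (u : ((∀ j, A j) × Θ) → ℝ) (i : I) (ci : A i)
    (μ : ((∀ j, A j) × Θ) → ℝ) : ℝ :=
  ∑ x : (∀ j, A j) × Θ, u (Function.update x.1 i ci, x.2) * μ x

/-- Best responses of player `i` (with utility `u`) to belief `μ`. -/
noncomputable def BRset (u : ((∀ j, A j) × Θ) → ℝ) (i : I)
    (μ : ((∀ j, A j) × Θ) → ℝ) : Set (A i) :=
  {ci | ∀ di : A i, dev u i di μ ≤ dev u i ci μ}

/-- The obedience constraint defining a Bayes correlated equilibrium. -/
def Obedient (u : ∀ i : I, ((∀ j, A j) × Θ) → ℝ) (p : ((∀ j, A j) × Θ) → ℝ) : Prop :=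
  ∀ i : I, ∀ ai bi : A i,
    0 ≤ ∑ x : (∀ j, A j) × Θ,
      (if x.1 i = ai then (u i x - u i (Function.update x.1 i bi, x.2)) * p x else 0)

/-- The separation constraint: recommendations inducing distinct beliefs have
disjoint best-response sets. -/
def Separated (u : ∀ i : I, ((∀ j, A j) × Θ) → ℝ) (p : ((∀ j, A j) × Θ) → ℝ) : Prop :=
  ∀ i : I, ∀ ai bi : A i, 0 < marg p i ai → 0 < marg p i bi →
    condBelief p i ai ≠ condBelief p i bi →
    BRset (u i) i (condBelief p i ai) ∩ BRset (u i) i (condBelief p i bi) = ∅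

/-- `p` is an outcome with `Θ`-marginal `π`. -/
def IsOutcome (π : Θ → ℝ) (p : ((∀ j, A j) × Θ) → ℝ) : Prop :=
  (∀ x, 0 ≤ p x) ∧ ∀ θ, (∑ a : ∀ j, A j, p (a, θ)) = π θ

/-- let `P` be a nonempty closed convex set of outcomes and
`a_i, b_i` two `P`-coherent actions of player `i`.  If both (i) all extreme
points of `P` give `a_i` and `b_i` a common conditional belief `μ` (or the
zero vector), and (ii) the unnormalized slices `p(a_i)·p_{a_i}` and
`p(b_i)·p_{b_i}` are proportional with a common ratio `λ > 0` across extreme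
points, fail, then some `p ∈ P` has both actions in its support with distinct
conditional beliefs.  (Beliefs over `A_{-i}×Θ` are represented as functions on
profile-state pairs that are constant in the `i`-th coordinate; the zero
conditional-belief convention is built into `condBelief` via division by
zero.) -/
theorem stmt19 {I : Type} [Fintype I] [DecidableEq I]
    {A : I → Type} [∀ i, Fintype (A i)] [∀ i, DecidableEq (A i)]
    [∀ i, Nonempty (A i)]
    {Θ : Type} [Fintype Θ] [Nonempty Θ]
    (P : Set (((∀ j, A j) × Θ) → ℝ))
    (hPne : P.Nonempty) (hPcl : IsClosed P) (hPcv : Convex ℝ P)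
    (hPout : ∀ p ∈ P, (∀ y, 0 ≤ p y) ∧ ∑ y : (∀ j, A j) × Θ, p y = 1)
    (i : I) (ai bi : A i)
    (hai : ∃ p ∈ P, 0 < marg p i ai) (hbi : ∃ p ∈ P, 0 < marg p i bi)
    (hno1 : ¬ ∃ μ : ((∀ j, A j) × Θ) → ℝ,
        (∀ y, 0 ≤ μ y) ∧
        (∀ (y : (∀ j, A j) × Θ) (c : A i), μ (Function.update y.1 i c, y.2) = μ y) ∧
        (∑ y : (∀ j, A j) × Θ, μ y = (Fintype.card (A i) : ℝ)) ∧
        ∀ p ∈ Set.extremePoints ℝ P,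
          (condBelief p i ai = μ ∨ condBelief p i ai = 0) ∧
          (condBelief p i bi = μ ∨ condBelief p i bi = 0))
    (hno2 : ¬ ∃ lam : ℝ, 0 < lam ∧ ∀ p ∈ Set.extremePoints ℝ P,
        ∀ y : (∀ j, A j) × Θ,
          p (Function.update y.1 i ai, y.2)
            = lam * p (Function.update y.1 i bi, y.2)) :
    ∃ p ∈ P, 0 < marg p i ai ∧ 0 < marg p i bi ∧
      condBelief p i ai ≠ condBelief p i bi := by
  by_contra hcon
  push_neg at hcon
  -- hcon : ∀ p ∈ P, 0 < marg p i ai → 0 < marg p i bi → condBelief p i ai = condBelief p i bi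
  obtain ⟨p0, hp0P, hp0⟩ := hai
  obtain ⟨q0, hq0P, hq0⟩ := hbi
  have hmem : ∀ p ∈ P, ∀ q ∈ P, ∀ t s : ℝ, 0 ≤ t → 0 ≤ s → t + s = 1 →
      (fun x => t * p x + s * q x) ∈ P := by
    intro p hp q hq t s ht hs hts
    have h := hPcv hp hq ht hs hts
    have he : (fun x => t * p x + s * q x) = t • p + s • q := by
      funext x; simp [smul_eq_mul]
    rw [he]; exact h
  set ps : ((∀ j, A j) × Θ) → ℝ := fun x => (1/2 : ℝ) * p0 x + (1/2 : ℝ) * q0 x with hps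
  have hpsP : ps ∈ P := hmem p0 hp0P q0 hq0P _ _ (by norm_num) (by norm_num) (by norm_num)
  have hpsnn : ∀ y, 0 ≤ ps y := (hPout ps hpsP).1
  have hpsa : marg ps i ai = 1/2 * marg p0 i ai + 1/2 * marg q0 i ai := by
    rw [hps]; exact marg_comb' p0 q0 _ _ i ai
  have hpsb : marg ps i bi = 1/2 * marg p0 i bi + 1/2 * marg q0 i bi := by
    rw [hps]; exact marg_comb' p0 q0 _ _ i bi
  have hα : 0 < marg ps i ai := by
    have := marg_nonneg' q0 (hPout q0 hq0P).1 i ai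
    rw [hpsa]; linarith
  have hβ : 0 < marg ps i bi := by
    have := marg_nonneg' p0 (hPout p0 hp0P).1 i bi
    rw [hpsb]; linarith
  set μ : ((∀ j, A j) × Θ) → ℝ := condBelief ps i ai with hμ
  have hab : condBelief ps i bi = μ := (hcon ps hpsP hα hβ).symm
  have hfs : ∀ x : (∀ j, A j) × Θ,
      ps (Function.update x.1 i ai, x.2) = marg ps i ai * μ x := by
    intro x
    rw [hμ]
    simp only [condBelief]
    field_simp
  have hgs : ∀ x : (∀ j, A j) × Θ,
      ps (Function.update x.1 i bi, x.2) = marg ps i bi * μ x := by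
    intro x
    rw [← hab]
    simp only [condBelief]
    field_simp
  -- Key lemma: the two polynomial identities for every p ∈ P
  have K : ∀ p ∈ P, ∀ x : (∀ j, A j) × Θ,
      p (Function.update x.1 i ai, x.2) * marg p i bi
        = p (Function.update x.1 i bi, x.2) * marg p i ai ∧
      p (Function.update x.1 i ai, x.2) * marg ps i bi
          - p (Function.update x.1 i bi, x.2) * marg ps i ai
        = (marg ps i bi * marg p i ai - marg ps i ai * marg p i bi) * μ x := by
    intro p hp x
    have hpnn := (hPout p hp).1
    have ha0 := marg_nonneg' p hpnn i ai
    have hb0 := marg_nonneg' p hpnn i bi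
    have hm1P : (fun y => (1/2 : ℝ) * p y + (1/2 : ℝ) * ps y) ∈ P :=
      hmem p hp ps hpsP _ _ (by norm_num) (by norm_num) (by norm_num)
    have hm2P : (fun y => (1/3 : ℝ) * p y + (2/3 : ℝ) * ps y) ∈ P :=
      hmem p hp ps hpsP _ _ (by norm_num) (by norm_num) (by norm_num)
    have hm1a := marg_comb' p ps (1/2) (1/2) i ai
    have hm1b := marg_comb' p ps (1/2) (1/2) i bi
    have hm2a := marg_comb' p ps (1/3) (2/3) i ai
    have hm2b := marg_comb' p ps (1/3) (2/3) i bi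
    have hm1apos : 0 < marg (fun y => (1/2 : ℝ) * p y + (1/2 : ℝ) * ps y) i ai := by
      rw [hm1a]; linarith
    have hm1bpos : 0 < marg (fun y => (1/2 : ℝ) * p y + (1/2 : ℝ) * ps y) i bi := by
      rw [hm1b]; linarith
    have hm2apos : 0 < marg (fun y => (1/3 : ℝ) * p y + (2/3 : ℝ) * ps y) i ai := by
      rw [hm2a]; linarith
    have hm2bpos : 0 < marg (fun y => (1/3 : ℝ) * p y + (2/3 : ℝ) * ps y) i bi := by
      rw [hm2b]; linarith
    have e1 := congrFun (hcon _ hm1P hm1apos hm1bpos) x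
    have e2 := congrFun (hcon _ hm2P hm2apos hm2bpos) x
    simp only [condBelief] at e1 e2
    rw [div_eq_div_iff hm1apos.ne' hm1bpos.ne'] at e1
    rw [div_eq_div_iff hm2apos.ne' hm2bpos.ne'] at e2
    rw [hm1a, hm1b] at e1
    rw [hm2a, hm2b] at e2
    rw [hfs x, hgs x] at e1 e2
    constructor
    · linear_combination 8 * e1 - 9 * e2
    · linear_combination 9 * e2 - 4 * e1
  -- sublemma S
  have S : ∀ p ∈ P,
      marg ps i bi * marg p i ai - marg ps i ai * marg p i bi ≠ 0 →
      ∀ x : (∀ j, A j) × Θ,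
        p (Function.update x.1 i ai, x.2) = marg p i ai * μ x ∧
        p (Function.update x.1 i bi, x.2) = marg p i bi * μ x := by
    intro p hp hne x
    obtain ⟨K1, K2⟩ := K p hp x
    constructor
    · refine mul_right_cancel₀ hne ?_
      linear_combination (marg p i ai) * K2 - (marg ps i ai) * K1
    · refine mul_right_cancel₀ hne ?_
      linear_combination (marg p i bi) * K2 - (marg ps i bi) * K1
  by_cases hall : ∀ r ∈ Set.extremePoints ℝ P,
      marg ps i bi * marg r i ai = marg ps i ai * marg r i bi
  · -- contradict hno2 with lam = α/β
    refine hno2 ⟨marg ps i ai / marg ps i bi, div_pos hα hβ, fun r hr y => ?_⟩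
    obtain ⟨K1, K2⟩ := K r (extremePoints_subset hr) y
    rw [div_mul_eq_mul_div, eq_div_iff hβ.ne']
    have h0 := hall r hr
    linear_combination K2 + μ y * h0
  · push_neg at hall
    obtain ⟨r0, hr0e, hr0ne⟩ := hall
    have hr0P : r0 ∈ P := extremePoints_subset hr0e
    have hr0ne' : marg ps i bi * marg r0 i ai - marg ps i ai * marg r0 i bi ≠ 0 :=
      sub_ne_zero.mpr hr0ne
    have T : ∀ p ∈ P, ∀ x : (∀ j, A j) × Θ,
        p (Function.update x.1 i ai, x.2) = marg p i ai * μ x ∧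
        p (Function.update x.1 i bi, x.2) = marg p i bi * μ x := by
      intro p hp x
      by_cases h : marg ps i bi * marg p i ai - marg ps i ai * marg p i bi = 0
      · have hmP : (fun y => (1/2 : ℝ) * p y + (1/2 : ℝ) * r0 y) ∈ P :=
          hmem p hp r0 hr0P _ _ (by norm_num) (by norm_num) (by norm_num)
        have hma := marg_comb' p r0 (1/2) (1/2) i ai
        have hmb := marg_comb' p r0 (1/2) (1/2) i bi
        have hne : marg ps i bi * marg (fun y => (1/2 : ℝ) * p y + (1/2 : ℝ) * r0 y) i ai
            - marg ps i ai * marg (fun y => (1/2 : ℝ) * p y + (1/2 : ℝ) * r0 y) i bi ≠ 0 := by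
          rw [hma, hmb]
          intro hEq
          exact hr0ne' (by linarith)
        obtain ⟨hfm, hgm⟩ := S _ hmP hne x
        obtain ⟨hfr, hgr⟩ := S r0 hr0P hr0ne' x
        rw [hma] at hfm
        rw [hmb] at hgm
        constructor
        · linear_combination 2 * hfm - hfr
        · linear_combination 2 * hgm - hgr
      · exact S p hp h x
    refine hno1 ⟨μ, fun y => ?_, fun y c => ?_, ?_, fun p hpe => ?_⟩
    · exact div_nonneg (hpsnn _) hα.le
    · show condBelief ps i ai _ = condBelief ps i ai _
      simp [condBelief, Function.update_idem]
    · show (∑ y : (∀ j, A j) × Θ, condBelief ps i ai y) = _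
      simp only [condBelief]
      rw [← Finset.sum_div, sum_update' ps i ai, mul_div_assoc, div_self hα.ne', mul_one]
    · have hpP := extremePoints_subset hpe
      have hTp := T p hpP
      have hpnn := (hPout p hpP).1
      constructor
      · rcases (marg_nonneg' p hpnn i ai).eq_or_lt with h | h
        · right
          funext x
          show p (Function.update x.1 i ai, x.2) / marg p i ai = 0
          rw [← h, div_zero]
        · left
          funext x
          show p (Function.update x.1 i ai, x.2) / marg p i ai = μ x
          rw [(hTp x).1, mul_comm, mul_div_cancel_right₀ _ h.ne']
      · rcases (marg_nonneg' p hpnn i bi).eq_or_lt with h | h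
        · right
          funext x
          show p (Function.update x.1 i bi, x.2) / marg p i bi = 0
          rw [← h, div_zero]
        · left
          funext x
          show p (Function.update x.1 i bi, x.2) / marg p i bi = μ x
          rw [(hTp x).2, mul_comm, mul_div_cancel_right₀ _ h.ne']
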